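/- Soundness of P for cryptographic infon-algebra models: if Γ ⊢ φ in P and ⟨I, M⟩ is a model with v(ψ) ∈ M for every ψ ∈ Γ, then v(φ) ∈ M. -/

import Mathlib

/-- Infons: formulas built from atoms, ⊤, ⊥, conjunction and primal implication. -/
inductive Infon : Type
  | atom : ℕ → Infon
  | top : Infon
  | bot : Infon
  | and : Infon → Infon → Infon
  | imp : Infon → Infon → Infon
deriving DecidableEq

/-- Derivability in the basic primal infon logic P (⊥ is an ordinary atom, no rule for it). -/
inductive DerP : Set Infon → Infon → Prop
  | top (Γ : Set Infon) : DerP Γ .top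
  | id (φ : Infon) : DerP {φ} φ
  | weak {Γ φ} (Δ : Set Infon) : DerP Γ φ → DerP (Γ ∪ Δ) φ
  | cut {Γ φ ψ} : DerP Γ φ → DerP (insert φ Γ) ψ → DerP Γ ψ
  | andI {Γ φ ψ} : DerP Γ φ → DerP Γ ψ → DerP Γ (.and φ ψ)
  | andE1 {Γ φ ψ} : DerP Γ (.and φ ψ) → DerP Γ φ
  | andE2 {Γ φ ψ} : DerP Γ (.and φ ψ) → DerP Γ ψ
  | impI {Γ ψ} (φ : Infon) : DerP Γ ψ → DerP Γ (.imp φ ψ)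
  | impE {Γ φ ψ} : DerP Γ φ → DerP Γ (.imp φ ψ) → DerP Γ ψ

/-- Derivability in P[⊥_w]: P plus the weak ⊥-elimination rule. -/
inductive DerW : Set Infon → Infon → Prop
  | top (Γ : Set Infon) : DerW Γ .top
  | id (φ : Infon) : DerW {φ} φ
  | weak {Γ φ} (Δ : Set Infon) : DerW Γ φ → DerW (Γ ∪ Δ) φ
  | cut {Γ φ ψ} : DerW Γ φ → DerW (insert φ Γ) ψ → DerW Γ ψ
  | andI {Γ φ ψ} : DerW Γ φ → DerW Γ ψ → DerW Γ (.and φ ψ)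
  | andE1 {Γ φ ψ} : DerW Γ (.and φ ψ) → DerW Γ φ
  | andE2 {Γ φ ψ} : DerW Γ (.and φ ψ) → DerW Γ ψ
  | impI {Γ ψ} (φ : Infon) : DerW Γ ψ → DerW Γ (.imp φ ψ)
  | impE {Γ φ ψ} : DerW Γ φ → DerW Γ (.imp φ ψ) → DerW Γ ψ
  | botEw {Γ φ ψ} : DerW Γ .bot → DerW Γ (.imp φ ψ) → DerW Γ ψ

/-- Positive atoms of an infon. -/
def posAt : Infon → Set Infon
  | .and φ ψ => posAt φ ∪ posAt ψ
  | .imp _ ψ => posAt ψ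
  | φ => {φ}

/-- Positive atoms of a context. -/
def posCtx (Γ : Set Infon) : Set Infon := ⋃ φ ∈ Γ, posAt φ

/-- Binary strings Σ* over Σ = {0,1}. -/
abbrev Str := List Bool

/-- A cryptographic infon algebra over binary strings: pairing with (partial) projections,
total encryption with (partial) decryption, and a nonempty public set E. -/
structure InfonAlgebra where
  pi : Str → Str → Str
  l : Str → Option Str
  r : Str → Option Str
  enc : Str → Str → Str
  dec : Str → Str → Option Str
  E : Set Str
  E_nonempty : E.Nonempty
  l_pi : ∀ x y, l (pi x y) = some x
  r_pi : ∀ x y, r (pi x y) = some y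
  dec_enc : ∀ x y, dec x (enc x y) = some y

/-- M ⊆ Σ* is closed (w.r.t. an infon algebra A). -/
def ClosedInfoSet (A : InfonAlgebra) (M : Set Str) : Prop :=
  A.E ⊆ M ∧
  (∀ a b, (a ∈ M ∧ b ∈ M) ↔ A.pi a b ∈ M) ∧
  (∀ a b, a ∈ M → A.enc a b ∈ M → b ∈ M) ∧
  (∀ a b, b ∈ M → A.enc a b ∈ M)

/-- An interpretation: an evaluation of infons by strings, commuting with the connectives
(∧ goes to pairing, primal → goes to encryption), with v(⊤) ∈ E. -/
structure Interp (A : InfonAlgebra) where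
  v : Infon → Str
  v_top : v .top ∈ A.E
  v_and : ∀ φ ψ, v (.and φ ψ) = A.pi (v φ) (v ψ)
  v_imp : ∀ φ ψ, v (.imp φ ψ) = A.enc (v φ) (v ψ)

/-- The closure of a set of strings: the least closed superset. -/
def closureA (A : InfonAlgebra) (M₀ : Set Str) : Set Str :=
  ⋂₀ {M | ClosedInfoSet A M ∧ M₀ ⊆ M}

/-- A set of infons is deductively closed if it is closed under derivability in P. -/
def DedClosed (T : Set Infon) : Prop := ∀ ψ, DerP T ψ → ψ ∈ T

/-- A plain interpretation: v is injective, and the closure of (the set of values of) any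
deductively closed set of infons contains no new values of infons. -/
def Plain (A : InfonAlgebra) (I : Interp A) : Prop :=
  Function.Injective I.v ∧
  ∀ T : Set Infon, DedClosed T →
    ∀ φ : Infon, I.v φ ∈ closureA A (I.v '' T) → I.v φ ∈ I.v '' T

/-! Soundness is induction on derivations once one observes that the infons whose value lies in
a closed set `M` form a truth set of P: the four closure conditions on `M`, transported along
`v`, are exactly the semantic counterparts of the rules for ⊤, ∧ and primal →. -/

structure IsPTruthSet (S : Set Infon) : Prop where
  top_mem : Infon.top ∈ S
  and_mem_iff : ∀ φ ψ, Infon.and φ ψ ∈ S ↔ φ ∈ S ∧ ψ ∈ S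
  imp_mem : ∀ φ ψ, ψ ∈ S → Infon.imp φ ψ ∈ S
  mem_of_imp_mem : ∀ φ ψ, φ ∈ S → Infon.imp φ ψ ∈ S → ψ ∈ S

theorem DerP.mem_of_subset {S : Set Infon} (hS : IsPTruthSet S) {Γ : Set Infon} {φ : Infon}
    (h : DerP Γ φ) (hΓ : Γ ⊆ S) : φ ∈ S := by
  induction h with
  | top => exact hS.top_mem
  | id => exact hΓ rfl
  | weak _ _ ih => exact ih (Set.union_subset_iff.mp hΓ).1
  | cut _ _ ih₁ ih₂ => exact ih₂ (Set.insert_subset (ih₁ hΓ) hΓ)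
  | andI _ _ ih₁ ih₂ => exact (hS.and_mem_iff _ _).mpr ⟨ih₁ hΓ, ih₂ hΓ⟩
  | andE1 _ ih => exact ((hS.and_mem_iff _ _).mp (ih hΓ)).1
  | andE2 _ ih => exact ((hS.and_mem_iff _ _).mp (ih hΓ)).2
  | impI _ _ ih => exact hS.imp_mem _ _ (ih hΓ)
  | impE _ _ ih₁ ih₂ => exact hS.mem_of_imp_mem _ _ (ih₁ hΓ) (ih₂ hΓ)

theorem Interp.isPTruthSet_preimage {A : InfonAlgebra} (I : Interp A) {M : Set Str}
    (hM : ClosedInfoSet A M) : IsPTruthSet (I.v ⁻¹' M) := by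
  obtain ⟨hE, hpi, hdec, henc⟩ := hM
  refine ⟨hE I.v_top, fun _ _ => ?_, fun _ _ hψ => ?_, fun _ _ hφ hφψ => ?_⟩
  · simp only [Set.mem_preimage, I.v_and, hpi]
  · simpa only [Set.mem_preimage, I.v_imp] using henc _ _ hψ
  · rw [Set.mem_preimage, I.v_imp] at hφψ
    exact hdec _ _ hφ hφψ

/-- Soundness of P for cryptographic infon-algebra models. -/
theorem alg_soundness (Γ : Set Infon) (φ : Infon) (h : DerP Γ φ)
    (A : InfonAlgebra) (I : Interp A) (M : Set Str) (hM : ClosedInfoSet A M)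
    (hΓ : ∀ ψ ∈ Γ, I.v ψ ∈ M) : I.v φ ∈ M :=
  h.mem_of_subset (I.isPTruthSet_preimage hM) hΓ
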